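/- The bivariate spectral density h(ω₀, ω₁; λ) = (1/(2λ ω₀² ω₁ √(2π))) exp(-(log(ω₁/ω₀) + 2λ²)²/(8λ²)) on the unit simplex {(ω₀,ω₁) : ω₀, ω₁ > 0, ω₀ + ω₁ = 1} satisfies the moment conditions ∫ ω₀ h dω = 1 and ∫ ω₁ h dω = 1 (integrating over ω₀ ∈ (0,1) with ω₁ = 1 - ω₀). -/

import Mathlib

/-!
Substituting `ω = sigmoid t`, i.e. `t = log (ω₀ / ω₁)`, turns `ω₀ h dω` into the density of
`𝓝(2λ², 4λ²)` and `ω₁ h dω` into that of `𝓝(-2λ², 4λ²)`: the two densities differ by the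
factor `ω₁ / ω₀ = e^{-t}`, and an exponential tilt of a Gaussian is again a Gaussian, here with
no extra constant because the mean is half the variance.
-/

open Real MeasureTheory

/-- Bivariate Hüsler-Reiss spectral density on the unit simplex,
as a function of `ω₀ = ω`, `ω₁ = 1 - ω`. -/
noncomputable def HRspec (l w0 w1 : ℝ) : ℝ :=
  (1 / (2 * l * w0 ^ 2 * w1 * Real.sqrt (2 * Real.pi))) *
    Real.exp (-(Real.log (w1 / w0) + 2 * l ^ 2) ^ 2 / (8 * l ^ 2))

open ProbabilityTheory NNReal

theorem integral_Ioo_zero_one_eq_integral_sigmoid {E : Type*} [NormedAddCommGroup E]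
    [NormedSpace ℝ E] (g : ℝ → E) :
    ∫ w in Set.Ioo (0 : ℝ) 1, g w = ∫ t, (sigmoid t * (1 - sigmoid t)) • g (sigmoid t) := by
  rw [← range_sigmoid, ← Set.image_univ,
    integral_image_eq_integral_deriv_smul_of_monotoneOn MeasurableSet.univ
      (fun t _ => (hasDerivAt_sigmoid t).hasDerivWithinAt) (sigmoid_monotone.monotoneOn _),
    Measure.restrict_univ]

theorem one_sub_sigmoid_div_sigmoid (t : ℝ) : (1 - sigmoid t) / sigmoid t = exp (-t) := by
  rw [← sigmoid_neg, ← sigmoid_mul_rexp_neg, mul_div_cancel_left₀ _ (sigmoid_pos t).ne']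

theorem exp_mul_gaussianPDFReal (c μ : ℝ) (v : ℝ≥0) (x : ℝ) :
    exp (c * x) * gaussianPDFReal μ v x
      = exp (c * μ + c ^ 2 * v / 2) * gaussianPDFReal (μ + c * v) v x := by
  rcases eq_or_ne v 0 with rfl | hv
  · simp
  have hv' : (v : ℝ) ≠ 0 := by exact_mod_cast hv
  simp only [gaussianPDFReal_def]
  rw [mul_left_comm, ← exp_add, mul_left_comm (exp _), ← exp_add]
  congr 2
  field_simp
  ring

section HRspec

variable {l : ℝ}

theorem sigmoid_mul_one_sub_mul_HRspec (hl : 0 < l) (t : ℝ) :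
    sigmoid t * (1 - sigmoid t) * HRspec l (sigmoid t) (1 - sigmoid t)
      = (sigmoid t)⁻¹ * gaussianPDFReal (2 * l ^ 2) (4 * l ^ 2).toNNReal t := by
  have h1σ : 0 < 1 - sigmoid t := sub_pos.2 (sigmoid_lt_one t)
  have hsqrt : √(2 * π * (4 * l ^ 2)) = 2 * l * √(2 * π) := by
    rw [show 2 * π * (4 * l ^ 2) = (2 * l) ^ 2 * (2 * π) by ring, sqrt_mul (by positivity),
      sqrt_sq (by positivity)]
  have hexp : -(-t + 2 * l ^ 2) ^ 2 / (8 * l ^ 2) = -(t - 2 * l ^ 2) ^ 2 / (2 * (4 * l ^ 2)) := by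
    ring
  rw [HRspec, one_sub_sigmoid_div_sigmoid, log_exp, hexp, gaussianPDFReal_def,
    Real.coe_toNNReal _ (by positivity), hsqrt]
  field_simp

theorem sigmoid_jacobian_smul_sigmoid_mul_HRspec (hl : 0 < l) (t : ℝ) :
    (sigmoid t * (1 - sigmoid t)) • (sigmoid t * HRspec l (sigmoid t) (1 - sigmoid t))
      = gaussianPDFReal (2 * l ^ 2) (4 * l ^ 2).toNNReal t := by
  rw [smul_eq_mul, mul_left_comm, sigmoid_mul_one_sub_mul_HRspec hl,
    mul_inv_cancel_left₀ (sigmoid_pos t).ne']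

theorem sigmoid_jacobian_smul_one_sub_sigmoid_mul_HRspec (hl : 0 < l) (t : ℝ) :
    (sigmoid t * (1 - sigmoid t)) • ((1 - sigmoid t) * HRspec l (sigmoid t) (1 - sigmoid t))
      = gaussianPDFReal (-(2 * l ^ 2)) (4 * l ^ 2).toNNReal t := by
  rw [smul_eq_mul, mul_left_comm, sigmoid_mul_one_sub_mul_HRspec hl, ← mul_assoc,
    ← div_eq_mul_inv, one_sub_sigmoid_div_sigmoid, ← neg_one_mul, exp_mul_gaussianPDFReal,
    Real.coe_toNNReal _ (by positivity),
    show -1 * (2 * l ^ 2) + (-1) ^ 2 * (4 * l ^ 2) / 2 = 0 by ring, exp_zero, one_mul,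
    show 2 * l ^ 2 + -1 * (4 * l ^ 2) = -(2 * l ^ 2) by ring]

end HRspec

/-- The bivariate Hüsler-Reiss spectral density satisfies the moment conditions
`∫ ω_i h dω = 1` for `i = 0, 1`. -/
theorem HRspec_moment_conditions (l : ℝ) (hl : 0 < l) :
    (∫ w in Set.Ioo (0 : ℝ) 1, w * HRspec l w (1 - w)) = 1 ∧
    (∫ w in Set.Ioo (0 : ℝ) 1, (1 - w) * HRspec l w (1 - w)) = 1 := by
  have hv : (4 * l ^ 2).toNNReal ≠ 0 := by positivity
  simp_rw [integral_Ioo_zero_one_eq_integral_sigmoid,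
    sigmoid_jacobian_smul_sigmoid_mul_HRspec hl,
    sigmoid_jacobian_smul_one_sub_sigmoid_mul_HRspec hl,
    integral_gaussianPDFReal_eq_one _ hv, and_self]
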